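/- With the notation of the context, assume that 𝒯 is a Serre subcategory of the heart 𝒟^♥, i.e. for every distinguished triangle X → Y → Z → X[1] with X, Y, Z ∈ 𝒟^♥, one has Y ∈ 𝒯 if and only if both X ∈ 𝒯 and Z ∈ 𝒯. Then 𝒯 is contained in the tilted heart 𝒟_υ^♥ := 𝒟_υ^{≤0} ∩ 𝒟_υ^{≥0}, and 𝒯 is a Serre subcategory of the tilted heart: for every distinguished triangle X → Y → Z → X[1] with X, Y, Z ∈ 𝒟_υ^♥, one has Y ∈ 𝒯 if and only if both X ∈ 𝒯 and Z ∈ 𝒯. -/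

import Mathlib

/-!
An object of the tilted heart is an extension `F[1] → X → T` with `F ∈ ℱ` and `T ∈ 𝒯`, so
`H⁻¹(X) ∈ ℱ` and `H⁰(X) ∈ 𝒯`. Let `X → Y → Z → X[1]` be distinguished with all terms in the
tilted heart and `Y ∈ 𝒯`. As `Y ∈ 𝒟^{≥0}` and `Z ∈ 𝒟^{≥-1}`, also `X ∈ 𝒟^{≥0}`, so `X = H⁰(X)`
lies in `𝒯`. Next `H⁻¹(Z)` is a subobject of `X` in the old heart: the cone `D` of
`H⁻¹(Z)[1] → Z → X[1]` lies in the old heart and `H⁻¹(Z) → X → D` is a short exact sequence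
there. Since `𝒯` is closed under subobjects, `H⁻¹(Z)` is both torsion and torsion-free, hence
zero, and `Z = H⁰(Z)` lies in `𝒯`. Conversely an extension of two objects of `𝒯` lies in the
old heart, where `𝒯` is closed under extensions.
-/

open CategoryTheory CategoryTheory.Limits CategoryTheory.Pretriangulated

universe v u

variable (C : Type u) [Category.{v} C] [HasZeroObject C] [Preadditive C] [HasShift C ℤ]
  [∀ n : ℤ, (shiftFunctor C n).Additive] [Pretriangulated C]

/-- A t-structure on a pretriangulated category `C`, given by the two isomorphism-closed
classes `le` (the objects of `𝒟^{≤0}`) and `ge` (the objects of `𝒟^{≥0}`).  With the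
convention that `X ∈ 𝒟^{≤n} ↔ le (X⟦n⟧)` and `X ∈ 𝒟^{≥n} ↔ ge (X⟦n⟧)`, the axioms read:
`𝒟^{≤-1} ⊆ 𝒟^{≤0}` (equivalently `𝒟^{≤0}[1] ⊆ 𝒟^{≤0}`), `𝒟^{≥1} ⊆ 𝒟^{≥0}` (equivalently
`𝒟^{≥0}[-1] ⊆ 𝒟^{≥0}`), `Hom(X, Y) = 0` for `X ∈ 𝒟^{≤0}` and `Y ∈ 𝒟^{≥1}`, and every
object sits in a distinguished triangle `A → X → B → A[1]` with `A ∈ 𝒟^{≤0}`,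
`B ∈ 𝒟^{≥1}`. -/
structure TStruct where
  /-- the class `𝒟^{≤0}` -/
  le : C → Prop
  /-- the class `𝒟^{≥0}` -/
  ge : C → Prop
  le_iso_closed : ∀ {X Y : C}, (X ≅ Y) → le X → le Y
  ge_iso_closed : ∀ {X Y : C}, (X ≅ Y) → ge X → ge Y
  le_shift : ∀ X : C, le X → le (X⟦(1 : ℤ)⟧)
  ge_shift : ∀ X : C, ge X → ge (X⟦(-1 : ℤ)⟧)
  hom_vanish : ∀ {X Y : C}, le X → ge (Y⟦(1 : ℤ)⟧) → ∀ f : X ⟶ Y, f = 0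
  exists_triangle : ∀ X : C, ∃ (A B : C) (f : A ⟶ X) (g : X ⟶ B) (h : B ⟶ A⟦(1 : ℤ)⟧),
    (Triangle.mk f g h ∈ distTriang C) ∧ le A ∧ ge (B⟦(1 : ℤ)⟧)

variable {C}

/-- The heart `𝒟^♥ = 𝒟^{≤0} ∩ 𝒟^{≥0}` of a t-structure. -/
def TStruct.heart (t : TStruct C) (X : C) : Prop := t.le X ∧ t.ge X

/-- A torsion pair `(𝒯, ℱ)` on the heart of a t-structure: two isomorphism-closed classes
of objects of the heart such that `Hom(T, F) = 0` for `T ∈ 𝒯`, `F ∈ ℱ`, and every object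
of the heart sits in a distinguished triangle `T → X → F → T[1]` with `T ∈ 𝒯`, `F ∈ ℱ`
(i.e. a short exact sequence `0 → T → X → F → 0` in the heart). -/
structure HeartTorsionPair (t : TStruct C) where
  /-- the torsion class -/
  torsion : C → Prop
  /-- the torsion-free class -/
  free : C → Prop
  torsion_mem_heart : ∀ X : C, torsion X → t.heart X
  free_mem_heart : ∀ X : C, free X → t.heart X
  torsion_iso_closed : ∀ {X Y : C}, (X ≅ Y) → torsion X → torsion Y
  free_iso_closed : ∀ {X Y : C}, (X ≅ Y) → free X → free Y
  hom_vanish : ∀ {T F : C}, torsion T → free F → ∀ f : T ⟶ F, f = 0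
  exists_triangle : ∀ X : C, t.heart X →
    ∃ (T F : C) (f : T ⟶ X) (g : X ⟶ F) (h : F ⟶ T⟦(1 : ℤ)⟧),
      (Triangle.mk f g h ∈ distTriang C) ∧ torsion T ∧ free F

/-- The connective part `𝒟_υ^{≤0}` of the tilting of a t-structure `t` with respect to a
torsion class `torsion` on its heart: those `X ∈ 𝒟^{≤0}` fitting in a distinguished
triangle `A → X → T → A[1]` with `A ∈ 𝒟^{≤-1}` and `T` torsion. -/
def TiltLE (t : TStruct C) (torsion : C → Prop) (X : C) : Prop :=
  t.le X ∧ ∃ (A T : C) (f : A ⟶ X) (g : X ⟶ T) (h : T ⟶ A⟦(1 : ℤ)⟧),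
    (Triangle.mk f g h ∈ distTriang C) ∧ t.le (A⟦(-1 : ℤ)⟧) ∧ torsion T

/-- The coconnective part `𝒟_υ^{≥0}` of the tilting of a t-structure `t` with respect to a
torsion-free class `free` on its heart: those `X ∈ 𝒟^{≥-1}` fitting in a distinguished
triangle `F[1] → X → B → F[2]` with `F` torsion-free and `B ∈ 𝒟^{≥0}`. -/
def TiltGE (t : TStruct C) (free : C → Prop) (X : C) : Prop :=
  t.ge (X⟦(-1 : ℤ)⟧) ∧ ∃ (F B : C) (f : F⟦(1 : ℤ)⟧ ⟶ X) (g : X ⟶ B)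
    (h : B ⟶ (F⟦(1 : ℤ)⟧)⟦(1 : ℤ)⟧),
    (Triangle.mk f g h ∈ distTriang C) ∧ free F ∧ t.ge B

open ZeroObject

section Triangle

variable {T : Triangle C} (hT : T ∈ distTriang C) (hT₁₃ : ∀ s : T.obj₁⟦(1 : ℤ)⟧ ⟶ T.obj₃, s = 0)
include hT hT₁₃

lemma Triangle.isZero₁_of_mor₁_eq_zero (h : T.mor₁ = 0) : IsZero T.obj₁ := by
  obtain ⟨s, hs⟩ := Triangle.coyoneda_exact₃ _ (rot_of_distTriang _ hT) (𝟙 (T.obj₁⟦(1 : ℤ)⟧))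
    (by simp [h]; exact comp_zero)
  have hshift : IsZero (T.obj₁⟦(1 : ℤ)⟧) := by
    rw [IsZero.iff_id_eq_zero, hs, show s = 0 from hT₁₃ s]
    exact zero_comp
  exact (Triangle.isZero₁_iff _ hT).2 ⟨h, hshift.eq_of_tgt _ _⟩

lemma Triangle.isZero₃_of_mor₂_eq_zero (h : T.mor₂ = 0) : IsZero T.obj₃ := by
  obtain ⟨s, hs⟩ := Triangle.yoneda_exact₃ _ hT (𝟙 T.obj₃) (by simp [h])
  rw [IsZero.iff_id_eq_zero, hs, hT₁₃ s, comp_zero]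

end Triangle

namespace TStruct

variable (t : TStruct C)

lemma hom_eq_zero_of_le_shift_of_ge {X Y : C} (hX : t.le (X⟦(-1 : ℤ)⟧)) (hY : t.ge Y)
    (f : X ⟶ Y) : f = 0 :=
  (shiftFunctor C (-1 : ℤ)).map_eq_zero_iff.1
    (t.hom_vanish hX (t.ge_iso_closed (shiftNegShift Y (1 : ℤ)).symm hY) _)

lemma le_of_le_shift {X : C} (hX : t.le (X⟦(-1 : ℤ)⟧)) : t.le X :=
  t.le_iso_closed (shiftNegShift X (1 : ℤ)) (t.le_shift _ hX)

lemma le_of_forall_hom_eq_zero (X : C)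
    (h : ∀ B : C, t.ge (B⟦(1 : ℤ)⟧) → ∀ f : X ⟶ B, f = 0) : t.le X := by
  obtain ⟨A, B, f, g, k, hT, hA, hB⟩ := t.exists_triangle X
  have hB₀ : IsZero B :=
    Triangle.isZero₃_of_mor₂_eq_zero hT (t.hom_vanish (t.le_shift A hA) hB) (h B hB g)
  have : IsIso f := (Triangle.isZero₃_iff_isIso₁ _ hT).1 hB₀
  exact t.le_iso_closed (asIso f) hA

lemma ge_of_forall_hom_eq_zero (X : C)
    (h : ∀ W : C, t.le (W⟦(-1 : ℤ)⟧) → ∀ f : W ⟶ X, f = 0) : t.ge X := by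
  obtain ⟨A, B, f, g, k, hT, hA, hB⟩ := t.exists_triangle (X⟦(-1 : ℤ)⟧)
  have hf : f = 0 := by
    have := h (A⟦(1 : ℤ)⟧) (t.le_iso_closed (shiftShiftNeg A (1 : ℤ)).symm hA)
      (f⟦(1 : ℤ)⟧' ≫ (shiftNegShift X (1 : ℤ)).hom)
    rwa [Preadditive.IsIso.comp_right_eq_zero, Functor.map_eq_zero_iff] at this
  have hA₀ : IsZero A :=
    Triangle.isZero₁_of_mor₁_eq_zero hT (t.hom_vanish (t.le_shift A hA) hB) hf
  have : IsIso g := (Triangle.isZero₁_iff_isIso₂ _ hT).1 hA₀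
  exact t.ge_iso_closed
    ((shiftFunctor C (1 : ℤ)).mapIso (asIso g).symm ≪≫ shiftNegShift X (1 : ℤ)) hB

lemma heart_of_isZero {X : C} (hX : IsZero X) : t.heart X :=
  ⟨t.le_of_forall_hom_eq_zero X fun _ _ f => hX.eq_of_src f 0,
    t.ge_of_forall_hom_eq_zero X fun _ _ f => hX.eq_of_tgt f 0⟩

variable {t}

lemma le_obj₂_of_distTriang {T : Triangle C} (hT : T ∈ distTriang C) (h₁ : t.le T.obj₁)
    (h₃ : t.le T.obj₃) : t.le T.obj₂ :=
  t.le_of_forall_hom_eq_zero _ fun _ hB f => by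
    obtain ⟨e, he⟩ := Triangle.yoneda_exact₂ _ hT f (t.hom_vanish h₁ hB _)
    rw [he, t.hom_vanish h₃ hB e, comp_zero]

lemma ge_obj₂_of_distTriang {T : Triangle C} (hT : T ∈ distTriang C) (h₁ : t.ge T.obj₁)
    (h₃ : t.ge T.obj₃) : t.ge T.obj₂ :=
  t.ge_of_forall_hom_eq_zero _ fun _ hW f => by
    obtain ⟨e, he⟩ := Triangle.coyoneda_exact₂ _ hT f (t.hom_eq_zero_of_le_shift_of_ge hW h₃ _)
    exact he.trans (by rw [t.hom_eq_zero_of_le_shift_of_ge hW h₁ e]; exact zero_comp)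

lemma ge_obj₁_of_distTriang {T : Triangle C} (hT : T ∈ distTriang C) (h₂ : t.ge T.obj₂)
    (h₃ : t.ge (T.obj₃⟦(-1 : ℤ)⟧)) : t.ge T.obj₁ :=
  t.ge_of_forall_hom_eq_zero _ fun _ hW f => by
    obtain ⟨e, he⟩ := Triangle.coyoneda_exact₂ _ (inv_rot_of_distTriang _ hT) f
      (t.hom_eq_zero_of_le_shift_of_ge hW h₂ _)
    exact he.trans (by rw [t.hom_eq_zero_of_le_shift_of_ge hW h₃ e]; exact zero_comp)

lemma heart_of_distTriang_comp {X Y Z F B D : C} {u : X ⟶ Y} {v : Y ⟶ Z}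
    {w : Z ⟶ X⟦(1 : ℤ)⟧} {a : F⟦(1 : ℤ)⟧ ⟶ Z} {b : Z ⟶ B} {c : B ⟶ F⟦(1 : ℤ)⟧⟦(1 : ℤ)⟧}
    {f : X ⟶ D} {g : D ⟶ F⟦(1 : ℤ)⟧} (hT : Triangle.mk u v w ∈ distTriang C)
    (hFB : Triangle.mk a b c ∈ distTriang C) (hD : Triangle.mk f g (a ≫ w) ∈ distTriang C)
    (hX : t.heart X) (hY : t.ge Y) (hF : t.le F) (hB : t.ge B) : t.heart D := by
  refine ⟨le_obj₂_of_distTriang hD hX.1 (t.le_shift F hF),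
    t.ge_of_forall_hom_eq_zero D fun W hW φ => ?_⟩
  have hφga : φ ≫ g ≫ a = 0 := by
    have hgaw : g ≫ a ≫ w = 0 := comp_distTriang_mor_zero₂₃ _ hD
    have hw : (φ ≫ g ≫ a) ≫ w = 0 := by simp [hgaw]
    obtain ⟨e, he⟩ := Triangle.coyoneda_exact₃ _ hT (φ ≫ g ≫ a) hw
    exact he.trans (by rw [t.hom_eq_zero_of_le_shift_of_ge hW hY e]; exact zero_comp)
  have hφg : φ ≫ g = 0 := by
    obtain ⟨e, he⟩ := Triangle.coyoneda_exact₂ _ (inv_rot_of_distTriang _ hFB) (φ ≫ g)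
      ((Category.assoc _ _ _).trans hφga)
    exact he.trans
      (by rw [t.hom_eq_zero_of_le_shift_of_ge hW (t.ge_shift B hB) e]; exact zero_comp)
  obtain ⟨e, he⟩ := Triangle.coyoneda_exact₂ _ hD φ hφg
  exact he.trans (by rw [t.hom_eq_zero_of_le_shift_of_ge hW hX.2 e]; exact zero_comp)

end TStruct

namespace HeartTorsionPair

variable {t : TStruct C} (tp : HeartTorsionPair t)

lemma isZero_of_torsion_of_free {X : C} (hT : tp.torsion X) (hF : tp.free X) : IsZero X :=
  (IsZero.iff_id_eq_zero X).2 (tp.hom_vanish hT hF _)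

lemma free_of_isZero {X : C} (hX : IsZero X) : tp.free X := by
  obtain ⟨T, F, f, g, h, hTF, hT, hF⟩ := tp.exists_triangle X (t.heart_of_isZero hX)
  have hT₀ : IsZero T := Triangle.isZero₁_of_mor₁_eq_zero hTF
    (t.hom_eq_zero_of_le_shift_of_ge
      (t.le_iso_closed (shiftShiftNeg T (1 : ℤ)).symm (tp.torsion_mem_heart T hT).1)
      (tp.free_mem_heart F hF).2)
    (hX.eq_of_tgt _ _)
  have : IsIso g := (Triangle.isZero₁_iff_isIso₂ _ hTF).1 hT₀
  exact tp.free_iso_closed (asIso g).symm hF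

lemma tilt_of_torsion {X : C} (hX : tp.torsion X) :
    TiltLE t tp.torsion X ∧ TiltGE t tp.free X := by
  have hXh := tp.torsion_mem_heart X hX
  refine ⟨⟨hXh.1, 0, X, 0, 𝟙 X, 0, contractible_distinguished₁ X,
      (t.heart_of_isZero ((shiftFunctor C (-1 : ℤ)).map_isZero (isZero_zero C))).1, hX⟩,
    ⟨t.ge_shift X hXh.2, 0, X, 0, 𝟙 X, 0, ?_, tp.free_of_isZero (isZero_zero C), hXh.2⟩⟩
  exact (Triangle.distinguished_iff_of_isZero₁ _
    ((shiftFunctor C (1 : ℤ)).map_isZero (isZero_zero C))).2 (inferInstanceAs (IsIso (𝟙 X)))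

lemma torsion_of_tiltLE_of_ge {X : C} (hX : TiltLE t tp.torsion X) (hge : t.ge X) :
    tp.torsion X := by
  obtain ⟨-, A, T, f, g, h, hAT, hA, hT⟩ := hX
  have hA₀ : IsZero A := Triangle.isZero₁_of_mor₁_eq_zero hAT
    (t.hom_eq_zero_of_le_shift_of_ge
      (t.le_iso_closed (shiftShiftNeg A (1 : ℤ)).symm (t.le_of_le_shift hA))
      (tp.torsion_mem_heart T hT).2)
    (t.hom_eq_zero_of_le_shift_of_ge hA hge f)
  have : IsIso g := (Triangle.isZero₁_iff_isIso₂ _ hAT).1 hA₀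
  exact tp.torsion_iso_closed (asIso g).symm hT

lemma torsion_obj₃_of_distTriang
    (hsub : ∀ {X Y Z : C} (f : X ⟶ Y) (g : Y ⟶ Z) (h : Z ⟶ X⟦(1 : ℤ)⟧),
      (Triangle.mk f g h ∈ distTriang C) → t.heart X → t.heart Y → t.heart Z →
        tp.torsion Y → tp.torsion X)
    {X Y Z : C} {u : X ⟶ Y} {v : Y ⟶ Z} {w : Z ⟶ X⟦(1 : ℤ)⟧}
    (hT : Triangle.mk u v w ∈ distTriang C) (hX : tp.torsion X) (hY : t.ge Y)
    (hZ : TiltLE t tp.torsion Z ∧ TiltGE t tp.free Z) : tp.torsion Z := by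
  obtain ⟨-, F, B, a, b, c, hFB, hF, hB⟩ := hZ.2
  obtain ⟨D, f, g, hD⟩ := distinguished_cocone_triangle₂ (a ≫ w)
  have hXh := tp.torsion_mem_heart X hX
  have hDh : t.heart D :=
    t.heart_of_distTriang_comp hT hFB hD hXh hY (tp.free_mem_heart F hF).1 hB
  have hF' : tp.free (F⟦(1 : ℤ)⟧⟦(-1 : ℤ)⟧) := tp.free_iso_closed (shiftShiftNeg F 1).symm hF
  have hF'tors : tp.torsion (F⟦(1 : ℤ)⟧⟦(-1 : ℤ)⟧) :=
    hsub _ _ _ (inv_rot_of_distTriang _ hD) (tp.free_mem_heart _ hF') hXh hDh hX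
  have hF₀ : IsZero (F⟦(1 : ℤ)⟧) :=
    (shiftFunctor C (1 : ℤ)).map_isZero (tp.isZero_of_torsion_of_free
      (tp.torsion_iso_closed (shiftShiftNeg F 1) hF'tors) hF)
  have : IsIso b := (Triangle.isZero₁_iff_isIso₂ _ hFB).1 hF₀
  exact tp.torsion_of_tiltLE_of_ge hZ.1 (t.ge_iso_closed (asIso b).symm hB)

end HeartTorsionPair

/-- If the torsion class `𝒯` of a torsion pair on the heart of a t-structure is a Serre
subcategory of the heart (membership in `𝒯` of the middle term of a distinguished triangle
with all three terms in the heart is equivalent to membership of the two outer terms), then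
`𝒯` is contained in the tilted heart `𝒟_υ^♥ = 𝒟_υ^{≤0} ∩ 𝒟_υ^{≥0}` and it is a Serre
subcategory of the tilted heart. -/
theorem torsion_serre_of_tilted_heart (t : TStruct C) (tp : HeartTorsionPair t)
    (hSerre : ∀ {X Y Z : C} (f : X ⟶ Y) (g : Y ⟶ Z) (h : Z ⟶ X⟦(1 : ℤ)⟧),
      (Triangle.mk f g h ∈ distTriang C) → t.heart X → t.heart Y → t.heart Z →
        (tp.torsion Y ↔ tp.torsion X ∧ tp.torsion Z)) :
    (∀ X : C, tp.torsion X → TiltLE t tp.torsion X ∧ TiltGE t tp.free X) ∧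
    (∀ {X Y Z : C} (f : X ⟶ Y) (g : Y ⟶ Z) (h : Z ⟶ X⟦(1 : ℤ)⟧),
      (Triangle.mk f g h ∈ distTriang C) →
      (TiltLE t tp.torsion X ∧ TiltGE t tp.free X) →
      (TiltLE t tp.torsion Y ∧ TiltGE t tp.free Y) →
      (TiltLE t tp.torsion Z ∧ TiltGE t tp.free Z) →
        (tp.torsion Y ↔ tp.torsion X ∧ tp.torsion Z)) := by
  refine ⟨fun X hX => tp.tilt_of_torsion hX, fun u v w hT hX _ hZ => ⟨fun hY => ?_, ?_⟩⟩
  · have hYge := (tp.torsion_mem_heart _ hY).2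
    have hXtors := tp.torsion_of_tiltLE_of_ge hX.1 (t.ge_obj₁_of_distTriang hT hYge hZ.2.1)
    refine ⟨hXtors, tp.torsion_obj₃_of_distTriang ?_ hT hXtors hYge hZ⟩
    exact fun f g h hT' hX' hY' hZ' hY'tors => ((hSerre f g h hT' hX' hY' hZ').1 hY'tors).1
  · rintro ⟨hXtors, hZtors⟩
    have hXh := tp.torsion_mem_heart _ hXtors
    have hZh := tp.torsion_mem_heart _ hZtors
    have hYh : t.heart _ :=
      ⟨t.le_obj₂_of_distTriang hT hXh.1 hZh.1, t.ge_obj₂_of_distTriang hT hXh.2 hZh.2⟩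
    exact (hSerre u v w hT hXh hYh hZh).2 ⟨hXtors, hZtors⟩
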